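/- Let φ: M → G be a monoid homomorphism from the free monoid M on a set E to a group G, and suppose φ(ē) = φ(e)^{-1} for an involution e ↦ ē on E. If x ∈ M satisfies φ(x) = 1 in the free group F on E under the induced map (i.e., the image of x in F is trivial), then x can be transformed into a word of the form (ū_1 u_1)(ū_2 u_2)⋯(ū_q u_q) by finitely many insertions of subwords ē e with e ∈ E, where ū denotes the reversed barred word. -/

import Mathlib

/-! A word that reduces to `1` is a Dyck word (`Cancels`), i.e. it is generated from `1` by
concatenation and by wrapping `s ↦ e s ē`: the Dyck words contain `1` and are closed under
inserting a pair `e ē` anywhere. Dyck words are brought to the form `∏ ūᵢ uᵢ` along the grammar.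
For the wrapping step, inserting `ē e` between the factors of `e (ū₁ u₁)⋯(ū_q u_q) ē` gives
`∏ (e ūᵢ uᵢ ē) · e ē`, and `e ūᵢ uᵢ ē` is the factor `v̄ v` of `v = uᵢ ē` because `bar ē = e`. -/

open FreeMonoid

/-- The anti-involution on the free monoid: reverse the word and bar each letter. -/
def barWord {E : Type*} (bar : E → E) (x : FreeMonoid E) : FreeMonoid E :=
  FreeMonoid.ofList ((FreeMonoid.toList x).reverse.map bar)

/-- One step of deletion of an adjacent pair `e ē` (with `bar` an involution
this also covers pairs `ē e`); a word maps to `1` in the free group `F`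
precisely when it reduces to the empty word by such cancellations. -/
def DelStep {E : Type*} (bar : E → E) (y y' : FreeMonoid E) : Prop :=
  ∃ (a b : FreeMonoid E) (e : E),
    y = a * (FreeMonoid.of e * FreeMonoid.of (bar e)) * b ∧ y' = a * b

/-- One step of insertion of a subword `ē e`. -/
def InsStep {E : Type*} (bar : E → E) (y y' : FreeMonoid E) : Prop :=
  ∃ (a b : FreeMonoid E) (e : E),
    y = a * b ∧ y' = a * (FreeMonoid.of (bar e) * FreeMonoid.of e) * b

namespace FreeMonoid

variable {α : Type*}

theorem mul_eq_one_iff {a b : FreeMonoid α} : a * b = 1 ↔ a = 1 ∧ b = 1 :=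
  List.append_eq_nil_iff

theorem mul_eq_mul_iff {a b c d : FreeMonoid α} :
    a * b = c * d ↔ (∃ m, c = a * m ∧ b = m * d) ∨ ∃ m, a = c * m ∧ d = m * b :=
  List.append_eq_append_iff

theorem mul_eq_of_iff {a b : FreeMonoid α} {x : α} :
    a * b = of x ↔ a = 1 ∧ b = of x ∨ a = of x ∧ b = 1 :=
  List.append_eq_singleton_iff

theorem of_mul_eq_of_mul_iff {x y : α} {a b : FreeMonoid α} :
    of x * a = of y * b ↔ x = y ∧ a = b :=
  List.cons_eq_cons

end FreeMonoid

section

variable {E : Type*}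

inductive Cancels (bar : E → E) : FreeMonoid E → Prop
  | one : Cancels bar 1
  | wrap (e : E) {s : FreeMonoid E} : Cancels bar s → Cancels bar (of e * s * of (bar e))
  | mul {s t : FreeMonoid E} : Cancels bar s → Cancels bar t → Cancels bar (s * t)

def barPairProd (bar : E → E) (L : List (FreeMonoid E)) : FreeMonoid E :=
  (L.map fun u => barWord bar u * u).prod

variable {bar : E → E}

theorem barWord_of (e : E) : barWord bar (of e) = of (bar e) := rfl

theorem barWord_mul (x y : FreeMonoid E) :
    barWord bar (x * y) = barWord bar y * barWord bar x := by
  simp [barWord, FreeMonoid.ofList_append]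

theorem Cancels.pair (e : E) : Cancels bar (of e * of (bar e)) := by
  simpa using Cancels.wrap e Cancels.one

theorem Cancels.insert {w : FreeMonoid E} (hw : Cancels bar w) (e : E) :
    ∀ a b, w = a * b → Cancels bar (a * (of e * of (bar e)) * b) := by
  induction hw with
  | one =>
    intro a b hab
    obtain ⟨rfl, rfl⟩ := FreeMonoid.mul_eq_one_iff.mp hab.symm
    simpa using Cancels.pair e
  | mul hs ht ihs iht =>
    intro a b hab
    rcases FreeMonoid.mul_eq_mul_iff.mp hab with ⟨m, rfl, rfl⟩ | ⟨m, rfl, rfl⟩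
    · simpa only [mul_assoc] using hs.mul (iht m b rfl)
    · simpa only [mul_assoc] using (ihs a m rfl).mul ht
  | @wrap f s hs ih =>
    intro a b hab
    cases a using FreeMonoid.casesOn with
    | one =>
      rw [one_mul] at hab
      subst hab
      simpa only [one_mul] using (Cancels.pair e).mul (hs.wrap f)
    | of_mul f' a =>
      rw [mul_assoc, mul_assoc, FreeMonoid.of_mul_eq_of_mul_iff] at hab
      obtain ⟨rfl, hab⟩ := hab
      rcases FreeMonoid.mul_eq_mul_iff.mp hab with ⟨m, rfl, hm⟩ | ⟨m, rfl, rfl⟩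
      · rcases FreeMonoid.mul_eq_of_iff.mp hm.symm with ⟨rfl, rfl⟩ | ⟨rfl, rfl⟩
        · simpa only [mul_assoc, mul_one] using (ih s 1 (mul_one s).symm).wrap f
        · simpa only [mul_assoc, mul_one] using (hs.wrap f).mul (Cancels.pair e)
      · simpa only [mul_assoc] using (ih a m rfl).wrap f

theorem Cancels.of_reflTransGen_delStep {x : FreeMonoid E}
    (hx : Relation.ReflTransGen (DelStep bar) x 1) : Cancels bar x := by
  induction hx using Relation.ReflTransGen.head_induction_on with
  | refl => exact Cancels.one
  | head hstep _ ih =>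
    obtain ⟨a, b, e, rfl, rfl⟩ := hstep
    exact ih.insert e a b rfl

theorem InsStep.mul_left (c : FreeMonoid E) {y y' : FreeMonoid E} (h : InsStep bar y y') :
    InsStep bar (c * y) (c * y') := by
  obtain ⟨a, b, e, rfl, rfl⟩ := h
  exact ⟨c * a, b, e, by simp only [mul_assoc], by simp only [mul_assoc]⟩

theorem InsStep.mul_right (c : FreeMonoid E) {y y' : FreeMonoid E} (h : InsStep bar y y') :
    InsStep bar (y * c) (y' * c) := by
  obtain ⟨a, b, e, rfl, rfl⟩ := h
  exact ⟨a, b * c, e, by simp only [mul_assoc], by simp only [mul_assoc]⟩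

theorem reflTransGen_insStep_mul {x x' y y' : FreeMonoid E}
    (hx : Relation.ReflTransGen (InsStep bar) x x')
    (hy : Relation.ReflTransGen (InsStep bar) y y') :
    Relation.ReflTransGen (InsStep bar) (x * y) (x' * y') :=
  (Relation.ReflTransGen.lift (· * y) (fun _ _ => InsStep.mul_right y) _ _ hx).trans
    (Relation.ReflTransGen.lift (x' * ·) (fun _ _ => InsStep.mul_left x') _ _ hy)

theorem barPairProd_append (L₁ L₂ : List (FreeMonoid E)) :
    barPairProd bar (L₁ ++ L₂) = barPairProd bar L₁ * barPairProd bar L₂ := by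
  simp [barPairProd]

theorem reflTransGen_insStep_conj_barPairProd (hbar : ∀ e, bar (bar e) = e) (e : E)
    (L : List (FreeMonoid E)) :
    Relation.ReflTransGen (InsStep bar) (of e * barPairProd bar L * of (bar e))
      (barPairProd bar (L.map (· * of (bar e)) ++ [of (bar e)])) := by
  induction L with
  | nil => simpa [barPairProd, barWord_of, hbar] using .refl
  | cons u L ih =>
    have hinsert : InsStep bar (of e * barPairProd bar (u :: L) * of (bar e))
        (of e * (barWord bar u * u) * of (bar e) * (of e * barPairProd bar L * of (bar e))) :=
      ⟨of e * (barWord bar u * u), barPairProd bar L * of (bar e), e,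
        by simp only [barPairProd, List.map_cons, List.prod_cons, mul_assoc],
        by simp only [mul_assoc]⟩
    have hpair : of e * (barWord bar u * u) * of (bar e) =
        barWord bar (u * of (bar e)) * (u * of (bar e)) := by
      simp only [barWord_mul, barWord_of, hbar, mul_assoc]
    rw [hpair] at hinsert
    simpa only [List.map_cons, List.cons_append, barPairProd, List.prod_cons] using
      Relation.ReflTransGen.head hinsert (reflTransGen_insStep_mul .refl ih)

theorem Cancels.exists_reflTransGen_insStep (hbar : ∀ e, bar (bar e) = e) {x : FreeMonoid E}
    (hx : Cancels bar x) :
    ∃ L, Relation.ReflTransGen (InsStep bar) x (barPairProd bar L) := by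
  induction hx with
  | one => exact ⟨[], Relation.ReflTransGen.refl⟩
  | wrap e _ ih =>
    obtain ⟨L, hL⟩ := ih
    exact ⟨_, (reflTransGen_insStep_mul (reflTransGen_insStep_mul .refl hL) .refl).trans
      (reflTransGen_insStep_conj_barPairProd hbar e L)⟩
  | mul _ _ ihs iht =>
    obtain ⟨Ls, hs⟩ := ihs
    obtain ⟨Lt, ht⟩ := iht
    exact ⟨Ls ++ Lt, barPairProd_append Ls Lt ▸ reflTransGen_insStep_mul hs ht⟩

end

/-- If a word `x` in the free monoid on `E` maps to `1` in the free group on `E`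
(i.e. it reduces to the empty word by cancellations of adjacent pairs `ē e` or
`e ē`), then finitely many insertions of subwords `ē e` transform `x` into a
word of the form `(ū₁ u₁)(ū₂ u₂)⋯(ū_q u_q)`. -/
theorem stmt_14 (E : Type*) (bar : E → E) (hbar : ∀ e, bar (bar e) = e)
    (x : FreeMonoid E)
    (hx : Relation.ReflTransGen (DelStep bar) x 1) :
    ∃ x' : FreeMonoid E,
      Relation.ReflTransGen (InsStep bar) x x' ∧
      ∃ L : List (FreeMonoid E),
        x' = (L.map (fun u => barWord bar u * u)).prod := by
  obtain ⟨L, hL⟩ := (Cancels.of_reflTransGen_delStep hx).exists_reflTransGen_insStep hbar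
  exact ⟨_, hL, L, rfl⟩
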